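/- Monotonicity of the winning region in k: for a graph G and k' ≤ k, every configuration C (i.e., nonempty C ⊆ V with |N(C)| ≤ k') that lies in the winning region of colosseum(G,k') also lies in the winning region of colosseum(G,k); equivalently, pit(G,k') is an induced sub-edge-alternating-graph of pit(G,k). -/

import Mathlib

open SimpleGraph

/-- Open neighborhood of a vertex set: vertices outside `C` adjacent to some vertex of `C`. -/
def nbhd {V : Type*} (G : SimpleGraph V) (C : Set V) : Set V :=
  {v | v ∉ C ∧ ∃ u ∈ C, G.Adj u v}

/-- The vertex sets of the connected components of the induced subgraph `G[C]`. -/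
def compSets {V : Type*} (G : SimpleGraph V) (C : Set V) : Set (Set V) :=
  {D | ∃ c : (G.induce C).ConnectedComponent, D = Subtype.val '' c.supp}

/-- The configurations (vertices) of `colosseum(G,k)`: nonempty `C ⊆ V` with `|N(C)| ≤ k`. -/
def colVert {V : Type*} (G : SimpleGraph V) (k : ℕ) : Set (Set V) :=
  {C | C.Nonempty ∧ (nbhd G C).ncard ≤ k}

/-- Existential (fly-move) edges of the colosseum: `C' = C \ {v}` for some `v ∈ C`,
provided `|N(C)| < k` and both configurations are vertices of the colosseum. -/
def exEdge {V : Type*} (G : SimpleGraph V) (k : ℕ) (C C' : Set V) : Prop :=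
  C ∈ colVert G k ∧ C' ∈ colVert G k ∧ (nbhd G C).ncard < k ∧ ∃ v ∈ C, C' = C \ {v}

/-- Universal (reveal-move) edges of the colosseum: from `C` to each connected component of
`G[C]`, provided `G[C]` has at least two components. -/
def unEdge {V : Type*} (G : SimpleGraph V) (k : ℕ) (C C' : Set V) : Prop :=
  C ∈ colVert G k ∧ 2 ≤ Nat.card (G.induce C).ConnectedComponent ∧ C' ∈ compSets G C

/-- The winning configurations `Q`: singletons `{v}` with `|N({v})| < k`. -/
def winConf {V : Type*} (G : SimpleGraph V) (k : ℕ) : Set (Set V) :=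
  {C | ∃ v : V, C = {v} ∧ (nbhd G {v}).ncard < k}

/-- The winning region `B(Q)` of `colosseum(G,k)`: configurations `C` admitting an
edge-alternating path `P` to the winning configurations, i.e. a set `P` of configurations
containing `C` such that every non-winning member of `P` has some existential successor in
`P`, or a nonempty set of universal successors all contained in `P`. -/
def winRegion {V : Type*} (G : SimpleGraph V) (k : ℕ) : Set (Set V) :=
  {C | ∃ P : Set (Set V), C ∈ P ∧ P ⊆ colVert G k ∧
    ∀ D ∈ P, D ∉ winConf G k →
      ((∃ D', exEdge G k D D' ∧ D' ∈ P) ∨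
       ({D' | unEdge G k D D'}.Nonempty ∧ {D' | unEdge G k D D'} ⊆ P))}

section Monotone

variable {V : Type*} (G : SimpleGraph V) {k' k : ℕ}

theorem colVert_mono (hkk : k' ≤ k) : colVert G k' ⊆ colVert G k :=
  fun _ ⟨hne, hcard⟩ => ⟨hne, hcard.trans hkk⟩

theorem winConf_mono (hkk : k' ≤ k) : winConf G k' ⊆ winConf G k :=
  fun _ ⟨v, hv, hlt⟩ => ⟨v, hv, hlt.trans_le hkk⟩

theorem exEdge_mono (hkk : k' ≤ k) {C C' : Set V} (h : exEdge G k' C C') : exEdge G k C C' :=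
  let ⟨hC, hC', hlt, hdel⟩ := h
  ⟨colVert_mono G hkk hC, colVert_mono G hkk hC', hlt.trans_le hkk, hdel⟩

theorem setOf_unEdge_eq (hkk : k' ≤ k) {C : Set V} (hC : C ∈ colVert G k') :
    {C' | unEdge G k C C'} = {C' | unEdge G k' C C'} := by
  ext C'
  exact ⟨fun ⟨_, h2, h3⟩ => ⟨hC, h2, h3⟩, fun ⟨_, h2, h3⟩ => ⟨colVert_mono G hkk hC, h2, h3⟩⟩

end Monotone

-- The certificate `P` for `k'` is itself a certificate for `k`.
theorem winRegion_mono_general {V : Type*} (G : SimpleGraph V) (k' k : ℕ)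
    (hkk : k' ≤ k) :
    winRegion G k' ⊆ winRegion G k := by
  rintro C ⟨P, hCP, hPsub, hP⟩
  refine ⟨P, hCP, hPsub.trans (colVert_mono G hkk), fun D hD hDw => ?_⟩
  rcases hP D hD (fun h => hDw (winConf_mono G hkk h)) with ⟨D', hex, hD'⟩ | ⟨hne, hsub⟩
  · exact Or.inl ⟨D', exEdge_mono G hkk hex, hD'⟩
  · rw [setOf_unEdge_eq G hkk (hPsub hD)]
    exact Or.inr ⟨hne, hsub⟩

/-- Monotonicity of the winning region in `k`: for `k' ≤ k` every configuration in the
winning region of `colosseum(G,k')` lies in the winning region of `colosseum(G,k)`. -/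
theorem winRegion_mono {V : Type*} [Finite V] (G : SimpleGraph V) (k' k : ℕ)
    (hkk : k' ≤ k) :
    winRegion G k' ⊆ winRegion G k :=
  winRegion_mono_general G k' k hkk
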